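/- arXiv:2207.04711 — 2 statements merged into one kernel-verified Lean document; each statement's English description precedes it below -/
import Mathlib

section
/- Let (Ω, μ) be a measure space and let p, q : Ω → ℝ be measurable with p(x) > 0 and q(x) > 0 for μ-almost every x, ∫_Ω p dμ = 1 and ∫_Ω q dμ = 1, and suppose the function x ↦ q(x) log( p(x)/q(x) ) is μ-integrable. Then lim_{ℓ → ∞} ∫_Ω ℓ ( 1 − ( p(x)/q(x) )^{1/ℓ} ) q(x) dμ(x) = − ∫_Ω q(x) log( p(x)/q(x) ) dμ(x), where the limit is over positive integers ℓ. -/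
/-!
Put `t = p/q`. For every `ℓ ≥ 1`, `ℓ (1 - t^{1/ℓ})` lies between `1 - t` (Bernoulli's inequality
for the exponent `1/ℓ ≤ 1`) and `-log t` (from `log u ≤ u - 1` at `u = t^{1/ℓ}`), and it tends to
`-log t` since `s ↦ t^s` has derivative `log t` at `0`. After multiplying by `q`, the integrands are
dominated by `|q - p| + |q log(p/q)|`, which is integrable, so dominated convergence applies.
-/

open MeasureTheory Real Filter Topology

namespace Real

lemma tendsto_natCast_mul_one_sub_rpow_one_div {t : ℝ} (ht : 0 < t) :
    Tendsto (fun ℓ : ℕ => (ℓ : ℝ) * (1 - t ^ (1 / (ℓ : ℝ)))) atTop (𝓝 (-log t)) := by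
  have h := ((tendsto_rpow_sub_one_log ht).comp
    (tendsto_inv_atTop_nhdsGT_zero.comp tendsto_natCast_atTop_atTop)).neg
  refine h.congr fun ℓ => ?_
  simp only [Function.comp_apply, inv_inv, one_div]
  ring

lemma one_sub_le_mul_one_sub_rpow_one_div {t s : ℝ} (ht : 0 ≤ t) (hs : 1 ≤ s) :
    1 - t ≤ s * (1 - t ^ (1 / s)) := by
  have hs₀ : 0 < s := by linarith
  have hbernoulli : t ^ (1 / s) ≤ 1 + 1 / s * (t - 1) := by
    simpa using rpow_one_add_le_one_add_mul_self (s := t - 1) (by linarith) (by positivity)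
      ((div_le_one hs₀).mpr hs)
  calc 1 - t = s * (1 - (1 + 1 / s * (t - 1))) := by field_simp; ring
    _ ≤ s * (1 - t ^ (1 / s)) := by gcongr

lemma mul_one_sub_rpow_one_div_le_neg_log {t s : ℝ} (ht : 0 < t) (hs : 0 < s) :
    s * (1 - t ^ (1 / s)) ≤ -log t := by
  have hlog : 1 / s * log t ≤ t ^ (1 / s) - 1 := by
    rw [← log_rpow ht]
    exact log_le_sub_one_of_pos (rpow_pos_of_pos ht _)
  calc s * (1 - t ^ (1 / s)) ≤ s * -(1 / s * log t) := by gcongr; linarith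
    _ = -log t := by field_simp

lemma abs_mul_one_sub_rpow_one_div_le {t s : ℝ} (ht : 0 < t) (hs : 1 ≤ s) :
    |s * (1 - t ^ (1 / s))| ≤ |1 - t| + |log t| := by
  have hlower := one_sub_le_mul_one_sub_rpow_one_div ht.le hs
  have hupper := mul_one_sub_rpow_one_div_le_neg_log ht (by linarith : 0 < s)
  rw [abs_le]
  constructor
  · linarith [neg_abs_le (1 - t), abs_nonneg (log t)]
  · linarith [neg_le_abs (log t), abs_nonneg (1 - t)]

end Real

lemma norm_mul_one_sub_div_rpow_one_div_mul_le {p q s : ℝ} (hp : 0 < p) (hq : 0 < q)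
    (hs : 1 ≤ s) :
    ‖s * (1 - (p / q) ^ (1 / s)) * q‖ ≤ |q - p| + |q * log (p / q)| := by
  have hqp : |q - p| = |1 - p / q| * q := by
    rw [← abs_of_pos hq, ← abs_mul, abs_of_pos hq, sub_mul, div_mul_cancel₀ _ hq.ne', one_mul]
  have hqlog : |q * log (p / q)| = |log (p / q)| * q := by rw [abs_mul, abs_of_pos hq, mul_comm]
  rw [Real.norm_eq_abs, abs_mul _ q, abs_of_pos hq, hqp, hqlog, ← add_mul]
  exact mul_le_mul_of_nonneg_right (abs_mul_one_sub_rpow_one_div_le (div_pos hp hq) hs) hq.le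

theorem tendsto_integral_one_sub_rpow_general {Ω : Type*} [MeasurableSpace Ω] (μ : Measure Ω)
    (p q : Ω → ℝ)
    (hppos : ∀ᵐ x ∂μ, 0 < p x) (hqpos : ∀ᵐ x ∂μ, 0 < q x)
    (hpI : ∫ x, p x ∂μ = 1) (hqI : ∫ x, q x ∂μ = 1)
    (hint : Integrable (fun x => q x * Real.log (p x / q x)) μ) :
    Tendsto (fun ℓ : ℕ => ∫ x, (ℓ : ℝ) * (1 - (p x / q x) ^ (1 / (ℓ : ℝ))) * q x ∂μ)
      atTop (nhds (-∫ x, q x * Real.log (p x / q x) ∂μ)) := by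
  have hpInt : Integrable p μ := integrable_of_integral_eq_one hpI
  have hqInt : Integrable q μ := integrable_of_integral_eq_one hqI
  rw [← integral_neg]
  refine tendsto_integral_filter_of_dominated_convergence
    (fun x => |q x - p x| + |q x * log (p x / q x)|) (Eventually.of_forall fun ℓ => ?_) ?_
    ((hqInt.sub hpInt).abs.add hint.abs) ?_
  · exact ((((hpInt.aemeasurable.div hqInt.aemeasurable).pow_const _).const_sub 1).const_mul _
      |>.mul hqInt.aemeasurable).aestronglyMeasurable
  · filter_upwards [eventually_ge_atTop 1] with ℓ hℓ
    filter_upwards [hppos, hqpos] with x hpx hqx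
    exact norm_mul_one_sub_div_rpow_one_div_mul_le hpx hqx (by exact_mod_cast hℓ)
  · filter_upwards [hppos, hqpos] with x hpx hqx
    simpa only [neg_mul, mul_comm (log _)] using
      (tendsto_natCast_mul_one_sub_rpow_one_div (div_pos hpx hqx)).mul_const (q x)

/-- For a.e.-positive measurable densities `p, q` integrating to `1` such that
`q log(p/q)` is integrable, `∫ ℓ (1 - (p/q)^{1/ℓ}) q dμ → -∫ q log(p/q) dμ` as the positive
integer `ℓ → ∞`. -/
theorem tendsto_integral_one_sub_rpow {Ω : Type*} [MeasurableSpace Ω] (μ : Measure Ω)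
    (p q : Ω → ℝ) (hp : Measurable p) (hq : Measurable q)
    (hppos : ∀ᵐ x ∂μ, 0 < p x) (hqpos : ∀ᵐ x ∂μ, 0 < q x)
    (hpI : ∫ x, p x ∂μ = 1) (hqI : ∫ x, q x ∂μ = 1)
    (hint : Integrable (fun x => q x * Real.log (p x / q x)) μ) :
    Tendsto (fun ℓ : ℕ => ∫ x, (ℓ : ℝ) * (1 - (p x / q x) ^ (1 / (ℓ : ℝ))) * q x ∂μ)
      atTop (nhds (-∫ x, q x * Real.log (p x / q x) ∂μ)) :=
  tendsto_integral_one_sub_rpow_general μ p q hppos hqpos hpI hqI hint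
end

section
/- Let p_0, q_1 : ℝ^d → ℝ be continuously differentiable and let u : ℝ^d → ℝ^d be a continuously differentiable vector field satisfying q_1(x) = p_0(x) − div u(x) for all x. Define q_t(x) = (1 − t) p_0(x) + t q_1(x) for t ∈ [0,1], and assume q_t(x) > 0 for all t ∈ [0,1] and x ∈ ℝ^d. Then the time-dependent vector field v(t,x) := u(x)/q_t(x) satisfies the continuity equation ∂_t q_t(x) + div_x( q_t(·) v(t,·) )(x) = 0 for all (t,x) ∈ [0,1] × ℝ^d. -/
open MeasureTheory Real
open scoped RealInnerProductSpace

/-- `ℝ^d` as a Euclidean space. -/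
abbrev Euc (d : ℕ) := EuclideanSpace ℝ (Fin d)

/-- Divergence of a vector field: the trace of its Jacobian. -/
noncomputable def divg {d : ℕ} (w : Euc d → Euc d) (x : Euc d) : ℝ :=
  LinearMap.trace ℝ (Euc d) (fderiv ℝ w x).toLinearMap

/-- **Moser Flow.** If `q_1 = p_0 - div u` for a `C¹` vector field `u`, the
linear interpolation `q_t = (1-t) p_0 + t q_1` is positive on `[0,1]`, and
`v(t,x) = u(x)/q_t(x)`, then `(q, v)` satisfies the continuity equation on `[0,1] × ℝ^d`. -/
theorem moser_flow_continuity_equation {d : ℕ}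
    (p0 q1 : Euc d → ℝ) (u : Euc d → Euc d)
    (hp0 : ContDiff ℝ 1 p0) (hq1 : ContDiff ℝ 1 q1) (hu : ContDiff ℝ 1 u)
    (hmoser : ∀ x, q1 x = p0 x - divg u x)
    (q : ℝ → Euc d → ℝ)
    (hq : ∀ t x, q t x = (1 - t) * p0 x + t * q1 x)
    (hqpos : ∀ t ∈ Set.Icc (0:ℝ) 1, ∀ x, 0 < q t x)
    (v : ℝ → Euc d → Euc d)
    (hv : ∀ t x, v t x = (q t x)⁻¹ • u x) :
    ∀ t ∈ Set.Icc (0:ℝ) 1, ∀ x : Euc d,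
      deriv (fun s : ℝ => q s x) t + divg (fun y : Euc d => q t y • v t y) x = 0 := by
  intro t ht x
  have hfun : (fun y : Euc d => q t y • v t y) = u := by
    funext y
    rw [hv, smul_smul, mul_inv_cancel₀ (hqpos t ht y).ne', one_smul]
  have hd : HasDerivAt (fun s : ℝ => q s x) (q1 x - p0 x) t := by
    have : HasDerivAt (fun s : ℝ => (1 - s) * p0 x + s * q1 x)
        ((-1) * p0 x + 1 * q1 x) t :=
      (((hasDerivAt_id t).const_sub 1).mul_const (p0 x)).add
        ((hasDerivAt_id t).mul_const (q1 x))
    simpa [hq, sub_eq_add_neg] using this.congr_deriv (by ring)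
  rw [hfun, hd.deriv, hmoser x]
  ring
end
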